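/- Let M = m₁ + m₂e₂ + m₃e₃ + m₄e₄ ∈ H(α,β) with w(M) = α m₂² + β m₃² + αβ m₄² < 0 and pure part v(M) = m₂e₂ + m₃e₃ + m₄e₄ ≠ 0. Let E = x₁ + x₂e₂ + x₃e₃ + x₄e₄ be the unique element with Matrix.exp(L(M)) = L(E). Then x₁ > 0, w(E) = α x₂² + β x₃² + αβ x₄² < 0, x₁² + w(E) > 0, and (1/2)·ln(x₁² + w(E)) + ( artanh(√(−w(E))/x₁) / √(−w(E)) )·(x₂e₂ + x₃e₃ + x₄e₄) = M. -/

import Mathlib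

open Quaternion Matrix Real
open scoped Nat

/-- The standard basis `(1, e₂, e₃, e₄)` of `H(α,β) = ℍ[ℝ, -α, -β]`. -/
noncomputable def gqBasis (α β : ℝ) : Fin 4 → ℍ[ℝ, -α, -β] :=
  ![1, ⟨0, 1, 0, 0⟩, ⟨0, 0, 1, 0⟩, ⟨0, 0, 0, 1⟩]

/-- The coordinates of a generalized quaternion with respect to `(1, e₂, e₃, e₄)`. -/
def gqCoord {α β : ℝ} (q : ℍ[ℝ, -α, -β]) : Fin 4 → ℝ :=
  ![q.re, q.imI, q.imJ, q.imK]

/-- `L M`: the matrix of left multiplication by `M` in the basis `(1, e₂, e₃, e₄)`. -/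
noncomputable def L (α β : ℝ) (M : ℍ[ℝ, -α, -β]) : Matrix (Fin 4) (Fin 4) ℝ :=
  Matrix.of fun i j => gqCoord (M * gqBasis α β j) i

/-- `w(X) = α x₂² + β x₃² + αβ x₄²`. -/
def w {α β : ℝ} (X : ℍ[ℝ, -α, -β]) : ℝ :=
  α * X.imI ^ 2 + β * X.imJ ^ 2 + α * β * X.imK ^ 2

/-- `v(X) = x₂e₂ + x₃e₃ + x₄e₄`, the pure part. -/
def v {α β : ℝ} (X : ℍ[ℝ, -α, -β]) : ℍ[ℝ, -α, -β] := ⟨0, X.imI, X.imJ, X.imK⟩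

/-- The real inverse hyperbolic tangent. -/
noncomputable def artanh (x : ℝ) : ℝ := (1 / 2) * Real.log ((1 + x) / (1 - x))

lemma gqL_one (α β : ℝ) : L α β 1 = 1 := by
  ext i j
  fin_cases i <;> fin_cases j <;>
    simp [L, gqCoord, gqBasis, QuaternionAlgebra.re_mul, QuaternionAlgebra.imI_mul,
      QuaternionAlgebra.imJ_mul, QuaternionAlgebra.imK_mul, Matrix.one_apply]

set_option maxHeartbeats 1000000 in
lemma gqL_smul (α β : ℝ) (c : ℝ) (X : ℍ[ℝ, -α, -β]) : L α β (c • X) = c • L α β X := by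
  ext i j
  fin_cases i <;> fin_cases j <;>
    simp [L, gqCoord, gqBasis, Matrix.smul_apply, QuaternionAlgebra.re_mul,
      QuaternionAlgebra.imI_mul, QuaternionAlgebra.imJ_mul, QuaternionAlgebra.imK_mul,
      smul_eq_mul] <;> ring

set_option maxHeartbeats 1000000 in
lemma gqL_mul (α β : ℝ) (X Y : ℍ[ℝ, -α, -β]) : L α β (X * Y) = L α β X * L α β Y := by
  ext i j
  fin_cases i <;> fin_cases j <;>
    simp [L, gqCoord, gqBasis, Matrix.mul_apply, Fin.sum_univ_four,
      QuaternionAlgebra.re_mul, QuaternionAlgebra.imI_mul,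
      QuaternionAlgebra.imJ_mul, QuaternionAlgebra.imK_mul] <;> ring

set_option maxHeartbeats 1000000 in
lemma gqL_decomp (α β : ℝ) (X : ℍ[ℝ, -α, -β]) :
    L α β X = X.re • (1 : Matrix (Fin 4) (Fin 4) ℝ) + L α β (v X) := by
  ext i j
  fin_cases i <;> fin_cases j <;>
    simp [L, v, gqCoord, gqBasis, Matrix.one_apply, QuaternionAlgebra.re_mul,
      QuaternionAlgebra.imI_mul, QuaternionAlgebra.imJ_mul, QuaternionAlgebra.imK_mul] <;> ring

lemma gqL_inj (α β : ℝ) {X Y : ℍ[ℝ, -α, -β]} (h : L α β X = L α β Y) : X = Y := by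
  apply QuaternionAlgebra.ext
  · have := congrFun (congrFun h 0) 0; simpa [L, gqCoord, gqBasis] using this
  · have := congrFun (congrFun h 1) 0; simpa [L, gqCoord, gqBasis] using this
  · have := congrFun (congrFun h 2) 0; simpa [L, gqCoord, gqBasis] using this
  · have := congrFun (congrFun h 3) 0; simpa [L, gqCoord, gqBasis] using this

lemma gq_v_mul_self (α β : ℝ) (X : ℍ[ℝ, -α, -β]) :
    v X * v X = (-(w X)) • (1 : ℍ[ℝ, -α, -β]) := by
  apply QuaternionAlgebra.ext <;>
    simp [v, w, QuaternionAlgebra.re_mul, QuaternionAlgebra.imI_mul,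
      QuaternionAlgebra.imJ_mul, QuaternionAlgebra.imK_mul] <;> ring

set_option maxHeartbeats 2000000 in
theorem exp_sq_aux {𝔸 : Type*} [NormedRing 𝔸] [NormedAlgebra ℝ 𝔸] [CompleteSpace 𝔸]
    (A : 𝔸) (r : ℝ) (hr : 0 < r) (hA : A * A = (r ^ 2) • 1) :
    NormedSpace.exp A = Real.cosh r • 1 + (Real.sinh r / r) • A := by
  have hAe : ∀ n : ℕ, A ^ (2 * n) = (r ^ (2 * n)) • 1 := fun n => by
    rw [pow_mul, sq, hA, smul_pow, one_pow, ← pow_mul]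
  have hAo : ∀ n : ℕ, A ^ (2 * n + 1) = (r ^ (2 * n)) • A := fun n => by
    rw [pow_succ, hAe, smul_mul_assoc, one_mul]
  have heven : HasSum (fun k : ℕ => (((2 * k)! : ℝ))⁻¹ • A ^ (2 * k))
      (Real.cosh r • (1 : 𝔸)) := by
    convert (Real.hasSum_cosh r).smul_const (1 : 𝔸) using 2 with k
    rw [hAe, smul_smul, div_eq_inv_mul]
  have hodd : HasSum (fun k : ℕ => (((2 * k + 1)! : ℝ))⁻¹ • A ^ (2 * k + 1))
      ((Real.sinh r / r) • A) := by
    convert ((Real.hasSum_sinh r).div_const r).smul_const A using 2 with k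
    rw [hAo, smul_smul]
    congr 1
    field_simp
    ring
  rw [NormedSpace.exp_eq_tsum ℝ]
  exact (heven.even_add_odd hodd).tsum_eq

set_option maxHeartbeats 2000000 in
theorem exp_smul_one_add_aux {𝔸 : Type*} [NormedRing 𝔸] [NormedAlgebra ℝ 𝔸] [CompleteSpace 𝔸]
    (m : ℝ) (A : 𝔸) (r : ℝ) (hr : 0 < r) (hA : A * A = (r ^ 2) • 1) :
    NormedSpace.exp (m • 1 + A) =
      (Real.exp m * Real.cosh r) • 1 + (Real.exp m * Real.sinh r / r) • A := by
  letI : NormedAlgebra ℚ 𝔸 := NormedAlgebra.restrictScalars ℚ ℝ 𝔸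
  have hcomm : Commute (m • (1 : 𝔸)) A := (Commute.one_left A).smul_left m
  have h1 : NormedSpace.exp (m • (1 : 𝔸)) = Real.exp m • 1 := by
    rw [← Algebra.algebraMap_eq_smul_one,
      ← NormedSpace.map_exp (algebraMap ℝ 𝔸) (continuous_algebraMap ℝ 𝔸),
      ← Real.exp_eq_exp_ℝ, Algebra.algebraMap_eq_smul_one]
  rw [NormedSpace.exp_add_of_commute hcomm, exp_sq_aux A r hr hA, h1, smul_mul_assoc, one_mul,
    smul_add, smul_smul, smul_smul, mul_div_assoc]

theorem matrix_exp_eq (m : ℝ) (A : Matrix (Fin 4) (Fin 4) ℝ) (r : ℝ) (hr : 0 < r)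
    (hA : A * A = (r ^ 2) • 1) :
    NormedSpace.exp (m • 1 + A) =
      (Real.exp m * Real.cosh r) • 1 + (Real.exp m * Real.sinh r / r) • A := by
  letI : SeminormedRing (Matrix (Fin 4) (Fin 4) ℝ) := Matrix.linftyOpSemiNormedRing
  letI : NormedRing (Matrix (Fin 4) (Fin 4) ℝ) := Matrix.linftyOpNormedRing
  letI : NormedAlgebra ℝ (Matrix (Fin 4) (Fin 4) ℝ) := Matrix.linftyOpNormedAlgebra
  exact exp_smul_one_add_aux m A r hr hA

lemma artanh_tanh_self (r : ℝ) : _root_.artanh (Real.sinh r / Real.cosh r) = r := by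
  have hc : (0:ℝ) < Real.cosh r := Real.cosh_pos r
  have h1 : 1 + Real.sinh r / Real.cosh r = Real.exp r / Real.cosh r := by
    rw [← Real.cosh_add_sinh r]; field_simp
  have h2 : 1 - Real.sinh r / Real.cosh r = Real.exp (-r) / Real.cosh r := by
    rw [← Real.cosh_sub_sinh r]; field_simp
  have h3 : Real.exp r / Real.cosh r / (Real.exp (-r) / Real.cosh r) = Real.exp (r - -r) := by
    rw [Real.exp_sub]
    field_simp
  rw [_root_.artanh, h1, h2, h3, Real.log_exp]
  ring

/-- If `w(M) < 0` and `v(M) ≠ 0`, then the hyperbolic logarithm formula applied to the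
exponential `E` of `M` (the unique `E` with `exp (L(M)) = L(E)`) recovers `M`. -/
theorem log_exp_of_w_neg (α β : ℝ) (M : ℍ[ℝ, -α, -β])
    (hw : w M < 0) (hv : v M ≠ 0)
    (E : ℍ[ℝ, -α, -β]) (hE : NormedSpace.exp (L α β M) = L α β E) :
    0 < E.re ∧ w E < 0 ∧ 0 < E.re ^ 2 + w E ∧
      ((1 / 2) * Real.log (E.re ^ 2 + w E)) • 1 +
        (_root_.artanh (Real.sqrt (-(w E)) / E.re) / Real.sqrt (-(w E))) • v E = M := by
  have hwneg : 0 < -(w M) := by linarith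
  set m := M.re with hm
  set r := Real.sqrt (-(w M)) with hrdef
  have hr : 0 < r := Real.sqrt_pos.mpr hwneg
  have hr2 : r ^ 2 = -(w M) := Real.sq_sqrt hwneg.le
  have hVV : v M * v M = (r ^ 2) • (1 : ℍ[ℝ, -α, -β]) := by
    rw [hr2]; exact gq_v_mul_self α β M
  have hAA : L α β (v M) * L α β (v M) = (r ^ 2) • 1 := by
    rw [← gqL_mul, hVV, gqL_smul, gqL_one]
  set c := Real.exp m * Real.sinh r / r with hc
  set E₀ : ℍ[ℝ, -α, -β] := ⟨Real.exp m * Real.cosh r, c * M.imI, c * M.imJ, c * M.imK⟩ with hE₀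
  have hre : E₀.re = Real.exp m * Real.cosh r := by rw [hE₀]
  have hvE₀ : v E₀ = c • v M := by
    apply QuaternionAlgebra.ext <;> simp [v, hE₀]
  have hEE₀ : E = E₀ := by
    apply gqL_inj α β
    rw [← hE, gqL_decomp α β M, matrix_exp_eq m (L α β (v M)) r hr hAA,
      gqL_decomp α β E₀, hre, hvE₀, gqL_smul]
  subst hEE₀
  set s := Real.exp m * Real.sinh r with hs0
  have hsinh : 0 < Real.sinh r := Real.sinh_pos_iff.mpr hr
  have hs : 0 < s := mul_pos (Real.exp_pos m) hsinh
  have hcr : c = s / r := rfl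
  have h1 : 0 < E₀.re := by rw [hre]; exact mul_pos (Real.exp_pos m) (Real.cosh_pos r)
  have hwE : w E₀ = -(s ^ 2) := by
    have hq : w E₀ = c ^ 2 * w M := by
      simp only [w, hE₀]
      ring
    have hwM : w M = -(r ^ 2) := by linarith
    rw [hq, hwM, hcr]
    field_simp
  have hsum : E₀.re ^ 2 + w E₀ = (Real.exp m) ^ 2 := by
    rw [hre, hwE]
    have hcs := Real.cosh_sq_sub_sinh_sq r
    nlinarith [hcs]
  have hlog : (1 / 2 : ℝ) * Real.log ((Real.exp m) ^ 2) = m := by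
    rw [show ((Real.exp m) ^ 2) = Real.exp m ^ (2:ℕ) from rfl, Real.log_pow, Real.log_exp]
    ring
  have hsq : Real.sqrt (-(w E₀)) = s := by rw [hwE, neg_neg, Real.sqrt_sq hs.le]
  have hrat : s / E₀.re = Real.sinh r / Real.cosh r := by
    rw [hre, hs0, mul_div_mul_left _ _ (Real.exp_ne_zero m)]
  refine ⟨h1, by rw [hwE]; exact neg_lt_zero.mpr (by positivity), by rw [hsum]; positivity, ?_⟩
  rw [hsum, hlog, hsq, hrat, artanh_tanh_self, hvE₀, hcr, smul_smul]
  have hcoef : r / s * (s / r) = 1 := by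
    field_simp
  rw [hcoef, one_smul]
  apply QuaternionAlgebra.ext <;> simp [v, hm]
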